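/- arXiv:1704.05273 — 2 statements merged into one kernel-verified Lean document; each statement's English description precedes it below -/
import Mathlib

section
/- For every integer k ≥ 1 and every x ∈ ℝ∖{0}, ∫_{−|x|}^{|x|} |Θ_{k−1}(x,y)| A_α(y) dy ≤ b_k(|x|) + |x|·b_{k−1}(|x|); in particular there exists a constant c > 0, depending only on α and k, such that ∫_{−|x|}^{|x|} |Θ_{k−1}(x,y)| A_α(y) dy ≤ c|x|^k for all x ≠ 0. -/
open MeasureTheory Real Set
open scoped ENNReal Nat

noncomputable section

/-- `A_α(x) = |x|^(2α+1)`. -/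
def Aa (α : ℝ) (x : ℝ) : ℝ := |x| ^ (2*α+1)

/-- The weighted measure `μ_α` with `dμ_α(x) = A_α(x) dx / (2^(α+1) Γ(α+1))`. -/
def mu (α : ℝ) : Measure ℝ :=
  volume.withDensity (fun x => ENNReal.ofReal (Aa α x / ((2:ℝ) ^ (α+1) * Real.Gamma (α+1))))

/-- The quantity `b_{x,y,z}`. -/
def bW (x y z : ℝ) : ℝ := if x ≠ 0 ∧ y ≠ 0 then (x^2 + y^2 - z^2)/(2*x*y) else 0

/-- The kernel `Δ_α(x,y,z)`. -/
def Delta (α x y z : ℝ) : ℝ :=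
  if |z| ∈ Set.Icc |(|x| - |y|)| (|x| + |y|) then
    ((((|x|+|y|)^2 - z^2) * (z^2 - (|x|-|y|)^2)) ^ (α - 1/2)) / (|x*y*z| ^ (2*α))
  else 0

/-- The Dunkl intertwining kernel `W_α(x,y,z)`. -/
def W (α x y z : ℝ) : ℝ :=
  (Real.Gamma (α+1))^2 / ((2:ℝ)^(α-1) * Real.sqrt π * Real.Gamma (α+1/2)) *
    (1 - bW x y z + bW z x y + bW z y x) * Delta α x y z

/-- Dunkl translation `τ_x f (y)`. -/
def tau (α : ℝ) (x : ℝ) (f : ℝ → ℝ) (y : ℝ) : ℝ :=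
  if x = 0 then f y
  else if y = 0 then f x
  else ∫ z, f z * W α x y z ∂(mu α)

/-- The Dunkl operator `Λ_α`. -/
def Lam (α : ℝ) (f : ℝ → ℝ) : ℝ → ℝ :=
  fun x => if x = 0 then (2*α+2) * deriv f 0
           else deriv f x + ((2*α+1)/x) * ((f x - f (-x))/2)

/-- The coefficients `b_n(x)` of the generalized Taylor formula. -/
def bcoef (α : ℝ) (n : ℕ) (x : ℝ) : ℝ :=
  if Even n then (x/2)^n / ((ascPochhammer ℝ (n/2)).eval (α+1) * (Nat.factorial (n/2) : ℝ))
  else (x/2)^n / ((ascPochhammer ℝ (n/2 + 1)).eval (α+1) * (Nat.factorial (n/2) : ℝ))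

/-- The pair of kernels `(u_k, v_k)` defined inductively. -/
def uv (α : ℝ) : ℕ → ((ℝ → ℝ → ℝ) × (ℝ → ℝ → ℝ))
  | 0 => (fun x _ => Real.sign x / (2 * Aa α x), fun _ y => Real.sign y / (2 * Aa α y))
  | k+1 => (fun x y => ∫ z in (|y|)..(|x|), (uv α k).2 x z,
            fun x y => (Real.sign y / Aa α y) * ∫ z in (|y|)..(|x|), (uv α k).1 x z * Aa α z)

/-- `Θ_k = u_k + v_k`. -/
def Theta (α : ℝ) (k : ℕ) (x y : ℝ) : ℝ := (uv α k).1 x y + (uv α k).2 x y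

/-- The integral remainder `R_k(x,f)`, with the convention `R_0(x,f) = τ_x f`. -/
def Rrem (α : ℝ) (k : ℕ) (x : ℝ) (f : ℝ → ℝ) : ℝ → ℝ :=
  match k with
  | 0 => tau α x f
  | k+1 => fun a => ∫ y in (-|x|)..(|x|), Theta α k x y * tau α y ((Lam α)^[k+1] f) a * Aa α y

/-- The modulus `ω_{p,α}^k(x,f)`. -/
def omegaMod (α : ℝ) (k : ℕ) (p : ℝ) (x : ℝ) (f : ℝ → ℝ) : ℝ≥0∞ :=
  eLpNorm (fun y => tau α x f y + tau α (-x) f y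
      - 2 * ∑ i ∈ Finset.range ((k-1)/2 + 1), bcoef α (2*i) x * (Lam α)^[2*i] f y)
    (ENNReal.ofReal p) (mu α)

/-- Dunkl convolution `f ∗_α g`. -/
def dconv (α : ℝ) (f g : ℝ → ℝ) (x : ℝ) : ℝ := ∫ y, tau α x f (-y) * g y ∂(mu α)

/-- Dilation `ph_t(x) = t^{-2(α+1)} ph(x/t)`. -/
def dil (α : ℝ) (ph : ℝ → ℝ) (t : ℝ) (x : ℝ) : ℝ := ph (x/t) / t ^ (2*(α+1))

/-- The class `𝒜_k` of even Schwartz functions with vanishing moments. -/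
def memA (α : ℝ) (k : ℕ) (ph : ℝ → ℝ) : Prop :=
  (∃ Φ : SchwartzMap ℝ ℝ, ⇑Φ = ph) ∧ (∀ x, ph (-x) = ph x) ∧
    ∀ i ≤ (k-1)/2, ∫ x in Set.Ioi (0:ℝ), x^(2*i) * ph x ∂(mu α) = 0

namespace Stmt1Aux


/-- `pch n a = a (a+1) ⋯ (a+n-1)`. -/
def pch (n : ℕ) (a : ℝ) : ℝ := (ascPochhammer ℝ n).eval a

lemma pch_zero (a : ℝ) : pch 0 a = 1 := by simp [pch]

lemma pch_pos {a : ℝ} (ha : 0 < a) (n : ℕ) : 0 < pch n a := by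
  induction n with
  | zero => simp [pch]
  | succ n ih =>
    rw [pch, ascPochhammer_succ_eval]
    have : (0:ℝ) < a + n := by positivity
    exact mul_pos ih this

lemma pch_mono {a b : ℝ} (ha : 0 < a) (hab : a ≤ b) (n : ℕ) : pch n a ≤ pch n b := by
  induction n with
  | zero => simp [pch]
  | succ n ih =>
    simp only [pch, ascPochhammer_succ_eval] at ih ⊢
    have hb : 0 < b := lt_of_lt_of_le ha hab
    have h1 : (0:ℝ) < a + n := by positivity
    exact mul_le_mul ih (by linarith) h1.le (le_of_lt (by simpa [pch] using pch_pos hb n))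

lemma pch_succ_left (n : ℕ) (a : ℝ) : pch (n+1) a = a * pch n (a+1) := by
  rw [pch, pch, ascPochhammer_succ_left]
  simp [Polynomial.eval_comp]

lemma pch_one (n : ℕ) : pch n 1 = n ! := by
  rw [pch, ascPochhammer_eval_one]

/-- denominators of the exact moments of `u_k`, `v_k` -/
def hUV (α : ℝ) : ℕ → (ℝ → ℝ) × (ℝ → ℝ)
  | 0 => (fun r => r + (2*α+2), fun r => r + 1)
  | k+1 => (fun r => (r + (2*α+2)) * (hUV α k).2 (r+1), fun r => (r+1) * (hUV α k).1 (r+1))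

variable {α : ℝ}

lemma hUV_pos (hα : -1/2 < α) : ∀ k : ℕ, ∀ r : ℝ, 0 ≤ r →
    0 < (hUV α k).1 r ∧ 0 < (hUV α k).2 r := by
  intro k
  induction k with
  | zero => intro r hr; constructor <;> · simp only [hUV]; linarith
  | succ k ih =>
    intro r hr
    obtain ⟨h1, h2⟩ := ih (r+1) (by linarith)
    constructor
    · simp only [hUV]; exact mul_pos (by linarith) h2
    · simp only [hUV]; exact mul_pos (by linarith) h1

lemma hUV_even (m : ℕ) : ∀ r : ℝ,
    (hUV α (2*m)).1 r = 2 * 4^m * pch m (r/2+1) * pch (m+1) (r/2+α+1) ∧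
    (hUV α (2*m)).2 r = 2 * 4^m * pch (m+1) ((r+1)/2) * pch m ((r+1)/2+α+1) := by
  induction m with
  | zero =>
    intro r
    have h1 : pch 1 (r/2+α+1) = r/2+α+1 := by rw [pch_succ_left, pch_zero]; ring
    have h2 : pch 1 ((r+1)/2) = (r+1)/2 := by rw [pch_succ_left, pch_zero]; ring
    constructor
    · show (fun r => r + (2*α+2)) r = _
      simp only [Nat.mul_zero, pow_zero, pch_zero, h1]
      ring
    · show (fun r => r + 1) r = _
      simp only [Nat.mul_zero, pow_zero, pch_zero, h2]
      ring
  | succ m ih =>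
    intro r
    have hidx : 2*(m+1) = (2*m)+1+1 := by ring
    rw [hidx]
    obtain ⟨ih1, ih2⟩ := ih (r+2)
    constructor
    · show (r + (2*α+2)) * ((r+1+1) * (hUV α (2*m)).1 (r+1+1)) = _
      have e1 : r+1+1 = r+2 := by ring
      rw [e1, ih1]
      rw [show m+1+1 = (m+1)+1 from rfl, pch_succ_left (m+1) (r/2+α+1),
        pch_succ_left m (r/2+1)]
      have e2 : (r+2)/2+1 = r/2+1+1 := by ring
      have e3 : (r+2)/2+α+1 = r/2+α+1+1 := by ring
      rw [← e2, ← e3]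
      ring
    · show (r+1) * (((r+1) + (2*α+2)) * (hUV α (2*m)).2 (r+1+1)) = _
      have e1 : r+1+1 = r+2 := by ring
      rw [e1, ih2]
      rw [show m+1+1 = (m+1)+1 from rfl, pch_succ_left (m+1) ((r+1)/2),
        pch_succ_left m ((r+1)/2+α+1)]
      have e2 : (r+2+1)/2 = (r+1)/2+1 := by ring
      have e3 : (r+2+1)/2+α+1 = (r+1)/2+α+1+1 := by ring
      rw [← e2, ← e3]
      ring

lemma hU_odd (m : ℕ) (r : ℝ) :
    (hUV α (2*m+1)).1 r = 4^(m+1) * pch (m+1) (r/2+1) * pch (m+1) (r/2+α+1) := by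
  show (r + (2*α+2)) * (hUV α (2*m)).2 (r+1) = _
  rw [(hUV_even m (r+1)).2]
  have e2 : (r+1+1)/2 = r/2+1 := by ring
  have e3 : (r+1+1)/2+α+1 = r/2+α+1+1 := by ring
  rw [e2, show r/2+1+α+1 = r/2+α+1+1 from by ring, pch_succ_left m (r/2+α+1)]
  ring

lemma hV_odd (m : ℕ) (r : ℝ) :
    (hUV α (2*m+1)).2 r = 4^(m+1) * pch (m+1) ((r+1)/2) * pch (m+1) ((r+1)/2+α+1) := by
  show (r+1) * (hUV α (2*m)).1 (r+1) = _
  rw [(hUV_even m (r+1)).1]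
  rw [pch_succ_left m ((r+1)/2)]
  ring




lemma contOn_prim (hX : 0 < X) {f : ℝ → ℝ} (hf : ContinuousOn f (Ioc 0 X)) :
    ContinuousOn (fun y => ∫ z in y..X, f z) (Ioc 0 X) := by
  intro y0 hy0
  have h0 : 0 < y0 := hy0.1
  have hyX : y0 ≤ X := hy0.2
  have ha0 : 0 < y0/2 := by linarith
  have haX : y0/2 ≤ X := by linarith
  have hU : uIcc (y0/2) X = Icc (y0/2) X := uIcc_of_le haX
  have hsub : uIcc (y0/2) X ⊆ Ioc 0 X := by
    rw [hU]; intro z hz; exact ⟨lt_of_lt_of_le ha0 hz.1, hz.2⟩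
  have hint : IntegrableOn f (uIcc (y0/2) X) volume :=
    (hf.mono hsub).integrableOn_compact isCompact_uIcc
  have hcont := intervalIntegral.continuousOn_primitive_interval_left hint
  have hmem : y0 ∈ uIcc (y0/2) X := by rw [hU]; exact ⟨by linarith, hyX⟩
  have h1 : ContinuousWithinAt (fun y => ∫ z in y..X, f z) (uIcc (y0/2) X) y0 :=
    hcont y0 hmem
  apply h1.mono_of_mem_nhdsWithin
  rw [mem_nhdsWithin]
  exact ⟨Ioi (y0/2), isOpen_Ioi, by simpa using by linarith,
    fun z hz => by rw [hU]; exact ⟨le_of_lt hz.1, hz.2.2⟩⟩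

lemma swap_integral (hX : 0 < X) {f : ℝ → ℝ} (hc : ContinuousOn f (Ioc 0 X))
    (h0 : ∀ y ∈ Ioc 0 X, 0 ≤ f y) {w : ℝ} (hw : 0 ≤ w) :
    ∫ y in (0:ℝ)..X, (∫ z in y..X, f z) * y ^ w
      = ∫ z in (0:ℝ)..X, f z * (z ^ (w+1) / (w+1)) := by
  have hmeas : MeasurableSet (Ioc (0:ℝ) X) := measurableSet_Ioc
  have hfm : AEMeasurable f (volume.restrict (Ioc 0 X)) := hc.aemeasurable hmeas
  obtain ⟨g, hgm, hfg⟩ := hfm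
  set G : ℝ → ℝ≥0∞ := fun z => ENNReal.ofReal (g z) with hG
  have hGm : Measurable G := hgm.ennreal_ofReal
  -- continuity facts
  have hprim : ContinuousOn (fun y => (∫ z in y..X, f z) * y ^ w) (Ioc 0 X) := by
    apply (contOn_prim hX hc).mul
    exact continuousOn_id.rpow_const (fun y hy => Or.inl (ne_of_gt hy.1))
  have hrhsc : ContinuousOn (fun z => f z * (z ^ (w+1) / (w+1))) (Ioc 0 X) := by
    apply hc.mul
    apply ContinuousOn.div_const
    exact continuousOn_id.rpow_const (fun y hy => Or.inl (ne_of_gt hy.1))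
  -- nonnegativity facts
  have hlnn : ∀ y ∈ Ioc (0:ℝ) X, 0 ≤ (∫ z in y..X, f z) * y ^ w := by
    intro y hy
    apply mul_nonneg
    · exact intervalIntegral.integral_nonneg hy.2
        (fun u hu => h0 u ⟨lt_of_lt_of_le hy.1 hu.1, hu.2⟩)
    · exact Real.rpow_nonneg hy.1.le w
  have hrnn : ∀ z ∈ Ioc (0:ℝ) X, 0 ≤ f z * (z ^ (w+1) / (w+1)) := by
    intro z hz
    apply mul_nonneg (h0 z hz)
    apply div_nonneg (Real.rpow_nonneg hz.1.le _) (by linarith)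
  -- lintegral identities
  have key : (∫⁻ y in Ioc (0:ℝ) X, ENNReal.ofReal ((∫ z in y..X, f z) * y ^ w))
      = ∫⁻ z in Ioc (0:ℝ) X, ENNReal.ofReal (f z * (z ^ (w+1) / (w+1))) := by
    have step1 : (∫⁻ y in Ioc (0:ℝ) X, ENNReal.ofReal ((∫ z in y..X, f z) * y ^ w))
        = ∫⁻ y in Ioc (0:ℝ) X, (∫⁻ z in Ioc (0:ℝ) X, (Ioi y).indicator G z) * ENNReal.ofReal (y ^ w) := by
      apply lintegral_congr_ae
      have hae : ∀ᵐ y ∂(volume.restrict (Ioc (0:ℝ) X)), y ∈ Ioc (0:ℝ) X :=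
        (ae_restrict_iff' hmeas).2 (Filter.Eventually.of_forall (fun y hy => hy))
      have hae2 : ∀ y : ℝ, 0 < y → (∫⁻ z in Ioc y X, ENNReal.ofReal (f z)) = ∫⁻ z in Ioc y X, G z := by
        intro y hy0
        apply lintegral_congr_ae
        have h3 : ∀ᵐ z ∂volume.restrict (Ioc y X), f z = g z :=
          ae_restrict_of_ae_restrict_of_subset (Ioc_subset_Ioc_left hy0.le) hfg
        filter_upwards [h3] with z hz
        rw [hz]
      filter_upwards [hae] with y hy
      have hy2 := hae2 y hy.1
      have hyX := hy.2
      have hy0 := hy.1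
      have hfi : IntegrableOn f (Ioc y X) volume := by
        apply IntegrableOn.mono_set _ Ioc_subset_Icc_self
        apply ContinuousOn.integrableOn_compact isCompact_Icc
        exact hc.mono (fun z hz => ⟨lt_of_lt_of_le hy0 hz.1, hz.2⟩)
      have hfnn : 0 ≤ᵐ[volume.restrict (Ioc y X)] f :=
        (ae_restrict_iff' measurableSet_Ioc).2
          (Filter.Eventually.of_forall (fun z hz => h0 z ⟨lt_trans hy0 hz.1, hz.2⟩))
      rw [intervalIntegral.integral_of_le hyX,
        ENNReal.ofReal_mul (setIntegral_nonneg measurableSet_Ioc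
          (fun z hz => h0 z ⟨lt_trans hy0 hz.1, hz.2⟩)),
        ofReal_integral_eq_lintegral_ofReal hfi hfnn, hy2]
      congr 1
      have hset : Ioi y ∩ Ioc (0:ℝ) X = Ioc y X := by
        ext z
        simp only [mem_inter_iff, mem_Ioi, mem_Ioc]
        constructor
        · rintro ⟨h1, _, h3⟩; exact ⟨h1, h3⟩
        · rintro ⟨h1, h2⟩; exact ⟨h1, lt_trans hy0 h1, h2⟩
      rw [lintegral_indicator measurableSet_Ioi, Measure.restrict_restrict measurableSet_Ioi, hset]
    have step2 : (∫⁻ y in Ioc (0:ℝ) X,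
          (∫⁻ z in Ioc (0:ℝ) X, (Ioi y).indicator G z) * ENNReal.ofReal (y ^ w))
        = ∫⁻ z in Ioc (0:ℝ) X, G z * ENNReal.ofReal (z ^ (w+1) / (w+1)) := by
      have hmove : (∫⁻ y in Ioc (0:ℝ) X,
            (∫⁻ z in Ioc (0:ℝ) X, (Ioi y).indicator G z) * ENNReal.ofReal (y ^ w))
          = ∫⁻ y in Ioc (0:ℝ) X, ∫⁻ z in Ioc (0:ℝ) X,
              (Ioi y).indicator G z * ENNReal.ofReal (y ^ w) := by
        apply lintegral_congr
        intro y
        exact (lintegral_mul_const' _ _ ENNReal.ofReal_ne_top).symm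
      rw [hmove]
      have hFm : Measurable (fun p : ℝ × ℝ =>
          (Ioi p.1).indicator G p.2 * ENNReal.ofReal (p.1 ^ w)) := by
        apply Measurable.mul
        · have heq : (fun p : ℝ × ℝ => (Ioi p.1).indicator G p.2)
              = ({p : ℝ × ℝ | p.1 < p.2}).indicator (fun p => G p.2) := by
            ext p
            by_cases h : p.1 < p.2 <;>
              simp [Set.indicator_apply, h, Set.mem_Ioi, Set.mem_setOf_eq]
          rw [heq]
          exact (hGm.comp measurable_snd).indicator
            (measurableSet_lt measurable_fst measurable_snd)
        · exact (((Real.continuous_rpow_const hw).comp continuous_fst).measurable).ennreal_ofReal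
      rw [lintegral_lintegral_swap hFm.aemeasurable]
      apply lintegral_congr_ae
      have hae : ∀ᵐ z ∂(volume.restrict (Ioc (0:ℝ) X)), z ∈ Ioc (0:ℝ) X :=
        (ae_restrict_iff' hmeas).2 (Filter.Eventually.of_forall (fun z hz => hz))
      filter_upwards [hae] with z hz
      have heq2 : (fun y => (Ioi y).indicator G z * ENNReal.ofReal (y ^ w))
          = (Iio z).indicator (fun y => G z * ENNReal.ofReal (y ^ w)) := by
        ext y
        by_cases h : y < z <;>
          simp [Set.indicator_apply, h, Set.mem_Ioi, Set.mem_Iio]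
      rw [heq2, lintegral_indicator measurableSet_Iio,
        Measure.restrict_restrict measurableSet_Iio]
      have hset2 : Iio z ∩ Ioc (0:ℝ) X = Ioo 0 z := by
        ext y
        simp only [mem_inter_iff, mem_Iio, mem_Ioc, mem_Ioo]
        constructor
        · rintro ⟨h1, h2, _⟩; exact ⟨h2, h1⟩
        · rintro ⟨h1, h2⟩; exact ⟨h2, h1, le_trans (le_of_lt h2) hz.2⟩
      rw [hset2, lintegral_const_mul' _ _ ENNReal.ofReal_ne_top]
      congr 1
      have hIoo : volume.restrict (Ioo (0:ℝ) z) = volume.restrict (Ioc 0 z) :=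
        Measure.restrict_congr_set Ioo_ae_eq_Ioc
      rw [hIoo]
      have hint : IntegrableOn (fun y : ℝ => y ^ w) (Ioc 0 z) volume :=
        (intervalIntegrable_iff_integrableOn_Ioc_of_le hz.1.le).1
          (intervalIntegral.intervalIntegrable_rpow' (by linarith))
      have hnn : 0 ≤ᵐ[volume.restrict (Ioc (0:ℝ) z)] (fun y : ℝ => y ^ w) :=
        (ae_restrict_iff' measurableSet_Ioc).2
          (Filter.Eventually.of_forall (fun y hy => Real.rpow_nonneg hy.1.le w))
      rw [← ofReal_integral_eq_lintegral_ofReal hint hnn]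
      congr 1
      rw [← intervalIntegral.integral_of_le hz.1.le,
        integral_rpow (Or.inl (by linarith : (-1:ℝ) < w))]
      rw [Real.zero_rpow (by linarith : w + 1 ≠ 0)]
      ring
    have step3 : (∫⁻ z in Ioc (0:ℝ) X, G z * ENNReal.ofReal (z ^ (w+1) / (w+1)))
        = ∫⁻ z in Ioc (0:ℝ) X, ENNReal.ofReal (f z * (z ^ (w+1) / (w+1))) := by
      apply lintegral_congr_ae
      have hae : ∀ᵐ z ∂(volume.restrict (Ioc (0:ℝ) X)), z ∈ Ioc (0:ℝ) X :=
        (ae_restrict_iff' hmeas).2 (Filter.Eventually.of_forall (fun z hz => hz))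
      filter_upwards [hae, hfg] with z hz hzg
      rw [ENNReal.ofReal_mul' (div_nonneg (Real.rpow_nonneg hz.1.le _)
        (by linarith : (0:ℝ) ≤ w + 1)), hzg]
    rw [step1, step2, step3]
  -- convert Bochner integrals to lintegrals
  rw [intervalIntegral.integral_of_le hX.le, intervalIntegral.integral_of_le hX.le]
  rw [MeasureTheory.integral_eq_lintegral_of_nonneg_ae
      ((ae_restrict_iff' hmeas).2 (Filter.Eventually.of_forall hlnn))
      (hprim.aestronglyMeasurable hmeas),
    MeasureTheory.integral_eq_lintegral_of_nonneg_ae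
      ((ae_restrict_iff' hmeas).2 (Filter.Eventually.of_forall hrnn))
      (hrhsc.aestronglyMeasurable hmeas),
    key]




variable {α : ℝ}

lemma continuous_Aa (hα : -1/2 < α) : Continuous (Aa α) := by
  have he : (0:ℝ) ≤ 2*α+1 := by linarith
  exact (Real.continuous_rpow_const he).comp continuous_abs

lemma uv_pack (hα : -1/2 < α) (hX : 0 < X) : ∀ k : ℕ,
    ContinuousOn (fun t => (uv α k).1 X t) (Ioc 0 X) ∧
    ContinuousOn (fun t => (uv α k).2 X t) (Ioc 0 X) ∧
    (∀ t ∈ Ioc (0:ℝ) X, 0 ≤ (uv α k).1 X t ∧ (uv α k).1 X t ≤ X^k/2 * t ^ (-(2*α+1)) ∧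
        0 ≤ (uv α k).2 X t ∧ (uv α k).2 X t ≤ X^k/2 * t ^ (-(2*α+1))) ∧
    (∀ j : ℕ, (∫ t in (0:ℝ)..X, (uv α k).1 X t * t ^ ((j:ℝ)+2*α+1))
          = X^(k+j+1)/(2 * (hUV α k).1 (j:ℝ)) ∧
        (∫ t in (0:ℝ)..X, (uv α k).2 X t * t ^ ((j:ℝ)+2*α+1))
          = X^(k+j+1)/(2 * (hUV α k).2 (j:ℝ))) := by
  have he : (0:ℝ) < 2*α+1 := by linarith
  have hXe : (0:ℝ) < X ^ (2*α+1) := Real.rpow_pos_of_pos hX _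
  intro k
  induction k with
  | zero =>
    have hu0 : ∀ t : ℝ, (uv α 0).1 X t = X ^ (-(2*α+1)) / 2 := by
      intro t
      show Real.sign X / (2 * Aa α X) = _
      rw [Real.sign_of_pos hX, Aa, abs_of_pos hX, Real.rpow_neg hX.le]
      field_simp
    have hv0 : ∀ t : ℝ, 0 < t → (uv α 0).2 X t = t ^ (-(2*α+1)) / 2 := by
      intro t ht
      show Real.sign t / (2 * Aa α t) = _
      rw [Real.sign_of_pos ht, Aa, abs_of_pos ht, Real.rpow_neg ht.le]
      field_simp
    refine ⟨?_, ?_, ?_, ?_⟩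
    · have : (fun t => (uv α 0).1 X t) = fun _ => X ^ (-(2*α+1)) / 2 := funext hu0
      rw [this]; exact continuousOn_const
    · apply ContinuousOn.congr
        ((continuousOn_id.rpow_const (fun t ht => Or.inl (ne_of_gt ht.1))).div_const 2)
      intro t ht
      exact hv0 t ht.1
    · intro t ht
      have h1 : (0:ℝ) < t ^ (-(2*α+1)) := Real.rpow_pos_of_pos ht.1 _
      have h2 : X ^ (-(2*α+1)) ≤ t ^ (-(2*α+1)) :=
        Real.rpow_le_rpow_of_nonpos ht.1 ht.2 (by linarith)
      refine ⟨by rw [hu0 t]; positivity, ?_, by rw [hv0 t ht.1]; positivity, ?_⟩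
      · rw [hu0 t, pow_zero]; linarith
      · rw [hv0 t ht.1, pow_zero]; linarith
    · intro j
      have hj : (0:ℝ) ≤ (j:ℝ) := Nat.cast_nonneg j
      have hep : (-1:ℝ) < (j:ℝ)+2*α+1 := by linarith
      constructor
      · simp only [hu0]
        rw [intervalIntegral.integral_const_mul, integral_rpow (Or.inl hep),
          Real.zero_rpow (by linarith : (j:ℝ)+2*α+1+1 ≠ 0),
          show (j:ℝ)+2*α+1+1 = ((j:ℝ)+1)+(2*α+1) from by ring,
          Real.rpow_add hX,
          show ((j:ℝ)+1) = ((j+1:ℕ):ℝ) from by push_cast; ring,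
          Real.rpow_natCast, Real.rpow_neg hX.le]
        show _ = X ^ (0+j+1) / (2 * ((j:ℝ) + (2*α+2)))
        rw [Nat.zero_add]
        have hne : ((j:ℝ)+1)+(2*α+1) ≠ 0 := by push_cast; linarith
        have hne2 : (j:ℝ) + (2*α+2) ≠ 0 := by linarith
        field_simp
        ring_nf
        have h : (2+α*2+(j:ℝ)) ≠ 0 := by linarith
        push_cast
        linear_combination (-(X ^ (1 + α * 2) * X * X ^ j)) * mul_inv_cancel₀ h
      · rw [intervalIntegral.integral_of_le hX.le,
          setIntegral_congr_fun measurableSet_Ioc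
            (g := fun t : ℝ => t ^ ((j:ℝ)) / 2) ?_,
          ← intervalIntegral.integral_of_le hX.le]
        swap
        · intro t ht
          show (uv α 0).2 X t * t ^ ((j:ℝ)+2*α+1) = t ^ ((j:ℝ)) / 2
          rw [hv0 t ht.1, div_mul_eq_mul_div, ← Real.rpow_add ht.1,
            show -(2*α+1)+((j:ℝ)+2*α+1) = (j:ℝ) from by ring]
        rw [intervalIntegral.integral_div, integral_rpow (Or.inl (by linarith : (-1:ℝ) < (j:ℝ))),
          Real.zero_rpow (by linarith : (j:ℝ)+1 ≠ 0),
          show ((j:ℝ)+1) = ((j+1:ℕ):ℝ) from by push_cast; ring,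
          Real.rpow_natCast]
        show _ = X ^ (0+j+1) / (2 * ((j:ℝ) + 1))
        rw [Nat.zero_add]
        have hne : ((j+1:ℕ):ℝ) ≠ 0 := by push_cast; linarith
        field_simp
        push_cast
        ring
  | succ k ih =>
    obtain ⟨ihUc, ihVc, ihB, ihM⟩ := ih
    have hu_def : ∀ t : ℝ, (uv α (k+1)).1 X t = ∫ z in (|t|)..X, (uv α k).2 X z := by
      intro t
      show (∫ z in (|t|)..(|X|), (uv α k).2 X z) = _
      rw [abs_of_pos hX]
    have hv_def : ∀ t : ℝ, (uv α (k+1)).2 X t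
        = (Real.sign t / Aa α t) * ∫ z in (|t|)..X, (uv α k).1 X z * Aa α z := by
      intro t
      show (Real.sign t / Aa α t) * (∫ z in (|t|)..(|X|), (uv α k).1 X z * Aa α z) = _
      rw [abs_of_pos hX]
    have hUAc : ContinuousOn (fun z => (uv α k).1 X z * Aa α z) (Ioc 0 X) :=
      ihUc.mul (continuous_Aa hα).continuousOn
    have hAa_pos_eq : ∀ z : ℝ, 0 < z → Aa α z = z ^ (2*α+1) := by
      intro z hz; rw [Aa, abs_of_pos hz]
    have hUAnn : ∀ z ∈ Ioc (0:ℝ) X, 0 ≤ (uv α k).1 X z * Aa α z := by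
      intro z hz
      exact mul_nonneg (ihB z hz).1 (Real.rpow_nonneg (abs_nonneg z) _)
    have hUAbd : ∀ z ∈ Ioc (0:ℝ) X, (uv α k).1 X z * Aa α z ≤ X^k/2 := by
      intro z hz
      have h1 := (ihB z hz).2.1
      have h2 : (uv α k).1 X z * Aa α z ≤ (X^k/2 * z ^ (-(2*α+1))) * z ^ (2*α+1) := by
        rw [hAa_pos_eq z hz.1]
        exact mul_le_mul_of_nonneg_right h1 (Real.rpow_nonneg hz.1.le _)
      calc (uv α k).1 X z * Aa α z ≤ (X^k/2 * z ^ (-(2*α+1))) * z ^ (2*α+1) := h2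
        _ = X^k/2 * (z ^ (-(2*α+1)) * z ^ (2*α+1)) := by ring
        _ = X^k/2 := by rw [← Real.rpow_add hz.1, neg_add_cancel, Real.rpow_zero, mul_one]
    refine ⟨?_, ?_, ?_, ?_⟩
    · apply ContinuousOn.congr (contOn_prim hX ihVc)
      intro t ht
      show (uv α (k+1)).1 X t = ∫ z in t..X, (uv α k).2 X z
      rw [hu_def t, abs_of_pos ht.1]
    · have hpow : ContinuousOn (fun t : ℝ => t ^ (-(2*α+1))) (Ioc 0 X) :=
        continuousOn_id.rpow_const (fun t ht => Or.inl (ne_of_gt ht.1))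
      apply ContinuousOn.congr (hpow.mul (contOn_prim hX hUAc))
      intro t ht
      show (uv α (k+1)).2 X t = t ^ (-(2*α+1)) * ∫ z in t..X, (uv α k).1 X z * Aa α z
      rw [hv_def t, abs_of_pos ht.1, Real.sign_of_pos ht.1, hAa_pos_eq t ht.1,
        Real.rpow_neg ht.1.le, one_div]
    · intro t ht
      have h0t : 0 < t := ht.1
      have htX : t ≤ X := ht.2
      have hIccsub : Icc t X ⊆ Ioc 0 X := fun z hz => ⟨lt_of_lt_of_le h0t hz.1, hz.2⟩
      have hunn : uIcc t X = Icc t X := uIcc_of_le htX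
      have hVint : IntervalIntegrable (fun z => (uv α k).2 X z) volume t X := by
        apply ContinuousOn.intervalIntegrable
        rw [hunn]; exact ihVc.mono hIccsub
      have hUAint : IntervalIntegrable (fun z => (uv α k).1 X z * Aa α z) volume t X := by
        apply ContinuousOn.intervalIntegrable
        rw [hunn]; exact hUAc.mono hIccsub
      have hpowint : IntervalIntegrable (fun z : ℝ => X^k/2 * z ^ (-(2*α+1))) volume t X := by
        apply ContinuousOn.intervalIntegrable
        rw [hunn]
        exact continuousOn_const.mul (continuousOn_id.rpow_const
          (fun z hz => Or.inl (ne_of_gt (lt_of_lt_of_le h0t hz.1))))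
      have htpow : (0:ℝ) < t ^ (-(2*α+1)) := Real.rpow_pos_of_pos h0t _
      refine ⟨?_, ?_, ?_, ?_⟩
      · rw [hu_def t, abs_of_pos h0t]
        exact intervalIntegral.integral_nonneg htX (fun u hu => (ihB u (hIccsub hu)).2.2.1)
      · rw [hu_def t, abs_of_pos h0t]
        have s1 : (∫ z in t..X, (uv α k).2 X z)
            ≤ ∫ z in t..X, X^k/2 * z ^ (-(2*α+1)) :=
          intervalIntegral.integral_mono_on htX hVint hpowint
            (fun z hz => (ihB z (hIccsub hz)).2.2.2)
        have s2 : (∫ z in t..X, X^k/2 * z ^ (-(2*α+1)))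
            ≤ ∫ z in t..X, X^k/2 * t ^ (-(2*α+1)) := by
          apply intervalIntegral.integral_mono_on htX hpowint intervalIntegrable_const
          intro z hz
          have : z ^ (-(2*α+1)) ≤ t ^ (-(2*α+1)) :=
            Real.rpow_le_rpow_of_nonpos h0t hz.1 (by linarith)
          have hXk : (0:ℝ) ≤ X^k := pow_nonneg hX.le k
          nlinarith
        have s3 : (∫ z in t..X, X^k/2 * t ^ (-(2*α+1)))
            = (X - t) * (X^k/2 * t ^ (-(2*α+1))) := by
          rw [intervalIntegral.integral_const, smul_eq_mul]
        have hXk : (0:ℝ) ≤ X^k := pow_nonneg hX.le k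
        have hC : (0:ℝ) ≤ X^k/2 * t ^ (-(2*α+1)) := by positivity
        have h4 : (X - t) * (X^k/2 * t ^ (-(2*α+1))) ≤ X * (X^k/2 * t ^ (-(2*α+1))) :=
          mul_le_mul_of_nonneg_right (by linarith) hC
        have h5 : X^(k+1)/2 * t ^ (-(2*α+1)) = X * (X^k/2 * t ^ (-(2*α+1))) := by
          rw [pow_succ]; ring
        linarith
      · rw [hv_def t]
        apply mul_nonneg
        · rw [Real.sign_of_pos h0t, hAa_pos_eq t h0t]
          positivity
        · rw [abs_of_pos h0t]
          exact intervalIntegral.integral_nonneg htX (fun u hu => hUAnn u (hIccsub hu))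
      · rw [hv_def t, abs_of_pos h0t, Real.sign_of_pos h0t, hAa_pos_eq t h0t]
        have s1 : (∫ z in t..X, (uv α k).1 X z * Aa α z) ≤ ∫ z in t..X, X^k/2 :=
          intervalIntegral.integral_mono_on htX hUAint intervalIntegrable_const
            (fun z hz => hUAbd z (hIccsub hz))
        have s2 : (∫ z in t..X, (X:ℝ)^k/2) = (X - t) * (X^k/2) := by
          rw [intervalIntegral.integral_const, smul_eq_mul]
        have hXk : (0:ℝ) ≤ X^k := pow_nonneg hX.le k
        have hint_nn : 0 ≤ ∫ z in t..X, (uv α k).1 X z * Aa α z :=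
          intervalIntegral.integral_nonneg htX (fun u hu => hUAnn u (hIccsub hu))
        have h1t : 1 / t ^ (2*α+1) = t ^ (-(2*α+1)) := by
          rw [Real.rpow_neg h0t.le, one_div]
        rw [div_mul_eq_mul_div, div_le_iff₀ (Real.rpow_pos_of_pos h0t (2*α+1))]
        have hrw : X^(k+1)/2 * t ^ (-(2*α+1)) * t ^ (2*α+1) = X^(k+1)/2 := by
          rw [mul_assoc, ← Real.rpow_add h0t, neg_add_cancel, Real.rpow_zero, mul_one]
        rw [hrw, pow_succ, one_mul]
        nlinarith
    · intro j
      have hj0 : (0:ℝ) ≤ (j:ℝ) := Nat.cast_nonneg j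
      have hjpos : (0:ℝ) < (j:ℝ) + 1 := by linarith
      have hUVk := hUV_pos (α := α) hα k ((j:ℝ)+1) (by linarith)
      constructor
      · -- u moment
        have stepA : (∫ t in (0:ℝ)..X, (uv α (k+1)).1 X t * t ^ ((j:ℝ)+2*α+1))
            = ∫ t in (0:ℝ)..X, (∫ z in t..X, (uv α k).2 X z) * t ^ ((j:ℝ)+2*α+1) := by
          rw [intervalIntegral.integral_of_le hX.le, intervalIntegral.integral_of_le hX.le]
          apply setIntegral_congr_fun measurableSet_Ioc
          intro t ht
          show (uv α (k+1)).1 X t * t ^ ((j:ℝ)+2*α+1) = _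
          rw [hu_def t, abs_of_pos ht.1]
        rw [stepA, swap_integral hX ihVc (fun y hy => (ihB y hy).2.2.1)
          (by linarith : (0:ℝ) ≤ (j:ℝ)+2*α+1)]
        have hc : ∀ z : ℝ, (uv α k).2 X z * (z ^ ((j:ℝ)+2*α+1+1) / ((j:ℝ)+2*α+1+1))
            = ((uv α k).2 X z * z ^ (((j:ℝ)+1)+2*α+1)) / ((j:ℝ)+2*α+1+1) := by
          intro z
          rw [show (j:ℝ)+2*α+1+1 = ((j:ℝ)+1)+2*α+1 from by ring]
          ring
        simp only [hc]
        rw [intervalIntegral.integral_div]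
        have ihV1 := (ihM (j+1)).2
        push_cast at ihV1
        rw [ihV1]
        show _ = X ^ (k+1+j+1) / (2 * (((j:ℝ) + (2*α+2)) * (hUV α k).2 ((j:ℝ)+1)))
        rw [show k+(j+1)+1 = k+1+j+1 from by omega]
        rw [div_div]
        congr 1
        ring
      · -- v moment
        have stepA : (∫ t in (0:ℝ)..X, (uv α (k+1)).2 X t * t ^ ((j:ℝ)+2*α+1))
            = ∫ t in (0:ℝ)..X, (∫ z in t..X, (uv α k).1 X z * Aa α z) * t ^ ((j:ℝ)) := by
          rw [intervalIntegral.integral_of_le hX.le, intervalIntegral.integral_of_le hX.le]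
          apply setIntegral_congr_fun measurableSet_Ioc
          intro t ht
          show (uv α (k+1)).2 X t * t ^ ((j:ℝ)+2*α+1)
              = (∫ z in t..X, (uv α k).1 X z * Aa α z) * t ^ ((j:ℝ))
          rw [hv_def t, abs_of_pos ht.1, Real.sign_of_pos ht.1, hAa_pos_eq t ht.1]
          have hstep : t ^ ((j:ℝ)+2*α+1) * (t ^ (2*α+1))⁻¹ = t ^ ((j:ℝ)) := by
            rw [← Real.rpow_neg ht.1.le, ← Real.rpow_add ht.1,
              show (j:ℝ)+2*α+1 + -(2*α+1) = (j:ℝ) from by ring]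
          rw [← hstep]
          ring
        rw [stepA, swap_integral hX hUAc hUAnn hj0]
        have stepC : (∫ z in (0:ℝ)..X, ((uv α k).1 X z * Aa α z) * (z ^ ((j:ℝ)+1) / ((j:ℝ)+1)))
            = ∫ z in (0:ℝ)..X, ((uv α k).1 X z * z ^ (((j:ℝ)+1)+2*α+1)) / ((j:ℝ)+1) := by
          rw [intervalIntegral.integral_of_le hX.le, intervalIntegral.integral_of_le hX.le]
          apply setIntegral_congr_fun measurableSet_Ioc
          intro z hz
          show ((uv α k).1 X z * Aa α z) * (z ^ ((j:ℝ)+1) / ((j:ℝ)+1))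
              = ((uv α k).1 X z * z ^ (((j:ℝ)+1)+2*α+1)) / ((j:ℝ)+1)
          have hsplit : z ^ ((2*α+1)+((j:ℝ)+1)) = z ^ (2*α+1) * z ^ ((j:ℝ)+1) :=
            Real.rpow_add hz.1 _ _
          rw [hAa_pos_eq z hz.1,
            show ((j:ℝ)+1)+2*α+1 = (2*α+1)+((j:ℝ)+1) from by ring, hsplit]
          ring
        rw [stepC, intervalIntegral.integral_div]
        have ihU1 := (ihM (j+1)).1
        push_cast at ihU1
        rw [ihU1]
        show _ = X ^ (k+1+j+1) / (2 * (((j:ℝ) + 1) * (hUV α k).1 ((j:ℝ)+1)))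
        rw [show k+(j+1)+1 = k+1+j+1 from by omega]
        rw [div_div]
        congr 1
        ring

lemma Aa_abs (α y : ℝ) : Aa α |y| = Aa α y := by rw [Aa, Aa, abs_abs]

lemma uv_abs {α x : ℝ} (hx : x ≠ 0) : ∀ m : ℕ, ∃ ε₁ ε₂ : ℝ, |ε₁| = 1 ∧ |ε₂| = 1 ∧
    ∀ y : ℝ, y ≠ 0 → (uv α m).1 x y = ε₁ * (uv α m).1 |x| |y| ∧
                     (uv α m).2 x y = ε₂ * Real.sign y * (uv α m).2 |x| |y| := by
  have hax : 0 < |x| := abs_pos.2 hx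
  intro m
  induction m with
  | zero =>
    refine ⟨Real.sign x, 1, ?_, by norm_num, ?_⟩
    · rcases hx.lt_or_gt with h | h
      · rw [Real.sign_of_neg h]; norm_num
      · rw [Real.sign_of_pos h]; norm_num
    · intro y hy
      have hay : 0 < |y| := abs_pos.2 hy
      constructor
      · show Real.sign x / (2 * Aa α x) = Real.sign x * (Real.sign |x| / (2 * Aa α |x|))
        rw [Real.sign_of_pos hax, Aa_abs]
        ring
      · show Real.sign y / (2 * Aa α y) = 1 * Real.sign y * (Real.sign |y| / (2 * Aa α |y|))
        rw [Real.sign_of_pos hay, Aa_abs]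
        ring
  | succ m ih =>
    obtain ⟨ε₁, ε₂, h1, h2, hstr⟩ := ih
    refine ⟨ε₂, ε₁, h2, h1, ?_⟩
    intro y hy
    have hay : 0 < |y| := abs_pos.2 hy
    have hposuIcc : ∀ z ∈ uIcc (|y|) (|x|), 0 < z := by
      intro z hz
      exact lt_of_lt_of_le (lt_min hay hax) hz.1
    constructor
    · show (∫ z in (|y|)..(|x|), (uv α m).2 x z)
          = ε₂ * ∫ z in (|(|y|)|)..(|(|x|)|), (uv α m).2 (|x|) z
      rw [abs_abs, abs_abs, ← intervalIntegral.integral_const_mul]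
      apply intervalIntegral.integral_congr
      intro z hz
      have hz0 := hposuIcc z hz
      have h5 := (hstr z (ne_of_gt hz0)).2
      show (uv α m).2 x z = ε₂ * (uv α m).2 (|x|) z
      rw [h5, Real.sign_of_pos hz0, abs_of_pos hz0]
      ring
    · show (Real.sign y / Aa α y) * (∫ z in (|y|)..(|x|), (uv α m).1 x z * Aa α z)
          = ε₁ * Real.sign y * ((Real.sign |y| / Aa α |y|) *
              ∫ z in (|(|y|)|)..(|(|x|)|), (uv α m).1 (|x|) z * Aa α z)
      rw [abs_abs, abs_abs, Real.sign_of_pos hay, Aa_abs]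
      have hinner : (∫ z in (|y|)..(|x|), (uv α m).1 x z * Aa α z)
          = ε₁ * ∫ z in (|y|)..(|x|), (uv α m).1 (|x|) z * Aa α z := by
        rw [← intervalIntegral.integral_const_mul]
        apply intervalIntegral.integral_congr
        intro z hz
        have hz0 := hposuIcc z hz
        have h5 := (hstr z (ne_of_gt hz0)).1
        show (uv α m).1 x z * Aa α z = ε₁ * ((uv α m).1 (|x|) z * Aa α z)
        rw [h5, abs_of_pos hz0]
        ring
      rw [hinner]
      ring


lemma measurable_realSign : Measurable Real.sign := by
  have : Real.sign = fun r : ℝ => if r < 0 then (-1:ℝ) else if 0 < r then 1 else 0 := rfl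
  rw [this]
  exact Measurable.ite (measurableSet_lt measurable_id measurable_const) measurable_const
    (Measurable.ite (measurableSet_lt measurable_const measurable_id) measurable_const
      measurable_const)

lemma aem_offzero {X : ℝ} {f : ℝ → ℝ} (hf : ContinuousOn f (Icc (-X) X \ {0})) :
    AEMeasurable f (volume.restrict (Ioc (-X) X)) := by
  have hs : MeasurableSet (Icc (-X) X \ {0}) :=
    measurableSet_Icc.diff (measurableSet_singleton 0)
  have h1 : AEMeasurable f (volume.restrict (Icc (-X) X \ {0})) := hf.aemeasurable hs
  apply h1.mono_ac
  refine Measure.AbsolutelyContinuous.mk (fun s hs' h0 => ?_)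
  rw [Measure.restrict_apply hs'] at h0 ⊢
  have hsub : s ∩ Ioc (-X) X ⊆ (s ∩ (Icc (-X) X \ {0})) ∪ {0} := by
    intro z hz
    by_cases h : z = 0
    · exact Or.inr (by simp [h])
    · exact Or.inl ⟨hz.1, Ioc_subset_Icc_self hz.2, h⟩
  exact measure_mono_null hsub (measure_union_null h0 (measure_singleton 0))

lemma bcoef_link {α : ℝ} (hα : -1/2 < α) (m : ℕ) (X : ℝ) :
    bcoef α (m+1) X = X^(m+1) / (hUV α m).1 0 := by
  have hα1 : (0:ℝ) < α + 1 := by linarith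
  rcases Nat.even_or_odd m with ⟨l, hl⟩ | ⟨l, hl⟩
  · have hm : m = 2*l := by omega
    subst hm
    have hden := (hUV_even (α := α) l 0).1
    rw [show (0:ℝ)/2+1 = 1 from by norm_num, show (0:ℝ)/2+α+1 = α+1 from by ring,
      pch_one] at hden
    rw [hden]
    have hodd : ¬ Even (2*l+1) := by simp [Nat.even_iff]
    have hdiv : (2*l+1)/2 = l := by omega
    rw [bcoef, if_neg hodd, hdiv]
    have hp2 : (2:ℝ)^(2*l+1) = 2*4^l := by
      rw [pow_succ, pow_mul]; norm_num; ring
    rw [div_pow, hp2]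
    show X^(2*l+1) / (2*4^l) / (pch (l+1) (α+1) * (l ! : ℝ))
        = X^(2*l+1) / (2*4^l * (l ! : ℝ) * pch (l+1) (α+1))
    rw [div_div]
    ring_nf
  · have hm : m = 2*l+1 := hl
    subst hm
    have hden := hU_odd (α := α) l 0
    rw [show (0:ℝ)/2+1 = 1 from by norm_num, show (0:ℝ)/2+α+1 = α+1 from by ring,
      pch_one] at hden
    rw [hden]
    have heven : Even (2*l+1+1) := ⟨l+1, by ring⟩
    have hdiv : (2*l+1+1)/2 = l+1 := by omega
    rw [bcoef, if_pos heven, hdiv]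
    have hp2 : (2:ℝ)^(2*l+1+1) = 4^(l+1) := by
      rw [show 2*l+1+1 = 2*(l+1) from by ring, pow_mul]; norm_num
    rw [div_pow, hp2]
    show X^(2*l+1+1) / (4:ℝ)^(l+1) / (pch (l+1) (α+1) * ((l+1) ! : ℝ))
        = X^(2*l+1+1) / (4^(l+1) * ((l+1) ! : ℝ) * pch (l+1) (α+1))
    rw [div_div]
    ring_nf

lemma bcoef_zero_eq {α : ℝ} (X : ℝ) : bcoef α 0 X = 1 := by
  rw [bcoef, if_pos (Even.zero)]
  norm_num

lemma bcoef_pos {α : ℝ} (hα : -1/2 < α) (n : ℕ) {x : ℝ} (hx : 0 < x) :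
    0 < bcoef α n x := by
  have hα1 : (0:ℝ) < α + 1 := by linarith
  have hf : (0:ℝ) < ((n/2) ! : ℝ) := Nat.cast_pos.2 (Nat.factorial_pos _)
  rw [bcoef]
  split_ifs
  · exact div_pos (pow_pos (by linarith) n) (mul_pos (pch_pos hα1 _) hf)
  · exact div_pos (pow_pos (by linarith) n) (mul_pos (pch_pos hα1 _) hf)

lemma bcoef_scale {α : ℝ} (n : ℕ) (x : ℝ) : bcoef α n x = x^n * bcoef α n 1 := by
  rw [bcoef, bcoef]
  split_ifs <;> · rw [div_pow, div_pow, one_pow]; ring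

lemma hU_le_hV {α : ℝ} (hα : -1/2 < α) (m : ℕ) : (hUV α m).1 0 ≤ (hUV α (m+1)).2 0 := by
  have hα1 : (0:ℝ) < α + 1 := by linarith
  rcases Nat.even_or_odd m with ⟨l, hl⟩ | ⟨l, hl⟩
  · have hm : m = 2*l := by omega
    subst hm
    have hL := (hUV_even (α := α) l 0).1
    rw [show (0:ℝ)/2+1 = 1 from by norm_num, show (0:ℝ)/2+α+1 = α+1 from by ring] at hL
    have hR := hV_odd (α := α) l 0
    rw [show ((0:ℝ)+1)/2 = 1/2 from by norm_num,
      show (1:ℝ)/2+α+1 = α+3/2 from by ring] at hR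
    rw [hL, show 2*l+1 = 2*l+1 from rfl, hR, pch_succ_left l (1/2:ℝ),
      show (1:ℝ)/2+1 = 3/2 from by norm_num]
    have e1 : pch l 1 ≤ pch l (3/2) := pch_mono one_pos (by norm_num) l
    have e2 : pch (l+1) (α+1) ≤ pch (l+1) (α+3/2) := pch_mono hα1 (by linarith) (l+1)
    have p1 : (0:ℝ) < pch l (3/2) := pch_pos (by norm_num) l
    have p2 : (0:ℝ) < pch (l+1) (α+1) := pch_pos hα1 _
    have p3 : (0:ℝ) ≤ (4:ℝ)^l := by positivity
    calc 2*4^l * pch l 1 * pch (l+1) (α+1)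
        = (2*4^l) * (pch l 1 * pch (l+1) (α+1)) := by ring
      _ ≤ (2*4^l) * (pch l (3/2) * pch (l+1) (α+3/2)) := by
          apply mul_le_mul_of_nonneg_left _ (by positivity)
          exact mul_le_mul e1 e2 p2.le p1.le
      _ = 4^(l+1) * (1/2 * pch l (3/2)) * pch (l+1) (α+3/2) := by ring
  · have hm : m = 2*l+1 := hl
    subst hm
    have hL := hU_odd (α := α) l 0
    rw [show (0:ℝ)/2+1 = 1 from by norm_num, show (0:ℝ)/2+α+1 = α+1 from by ring] at hL
    have hR := (hUV_even (α := α) (l+1) 0).2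
    rw [show ((0:ℝ)+1)/2 = 1/2 from by norm_num,
      show (1:ℝ)/2+α+1 = α+3/2 from by ring] at hR
    rw [hL, show 2*l+1+1 = 2*(l+1) from by ring, hR, pch_succ_left (l+1) (1/2:ℝ),
      show (1:ℝ)/2+1 = 3/2 from by norm_num]
    have e1 : pch (l+1) 1 ≤ pch (l+1) (3/2) := pch_mono one_pos (by norm_num) (l+1)
    have e2 : pch (l+1) (α+1) ≤ pch (l+1) (α+3/2) := pch_mono hα1 (by linarith) (l+1)
    have p1 : (0:ℝ) < pch (l+1) (3/2) := pch_pos (by norm_num) _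
    have p2 : (0:ℝ) < pch (l+1) (α+1) := pch_pos hα1 _
    calc 4^(l+1) * pch (l+1) 1 * pch (l+1) (α+1)
        = (4^(l+1)) * (pch (l+1) 1 * pch (l+1) (α+1)) := by ring
      _ ≤ (4^(l+1)) * (pch (l+1) (3/2) * pch (l+1) (α+3/2)) := by
          apply mul_le_mul_of_nonneg_left _ (by positivity)
          exact mul_le_mul e1 e2 p2.le p1.le
      _ = 2*4^(l+1) * (1/2 * pch (l+1) (3/2)) * pch (l+1) (α+3/2) := by ring

lemma main_bound {α : ℝ} (hα : -1/2 < α) (m : ℕ) {x : ℝ} (hx : x ≠ 0) :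
    (∫ y in (-|x|)..(|x|), |Theta α m x y| * Aa α y)
      ≤ bcoef α (m+1) |x| + |x| * bcoef α m |x| := by
  have hX : 0 < |x| := abs_pos.2 hx
  have he : (0:ℝ) < 2*α+1 := by linarith
  have hAa0 : Aa α 0 = 0 := by rw [Aa, abs_zero, Real.zero_rpow (ne_of_gt he)]
  have hAa_nonneg : ∀ y : ℝ, 0 ≤ Aa α y := fun y => Real.rpow_nonneg (abs_nonneg y) _
  obtain ⟨hUc, hVc, hB, hM⟩ := uv_pack (α := α) hα hX m
  obtain ⟨ε₁, ε₂, hε₁, hε₂, hstr⟩ := uv_abs (α := α) hx m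
  set X := |x| with hXdef
  set U : ℝ → ℝ := fun t => (uv α m).1 X t with hUdef
  set V : ℝ → ℝ := fun t => (uv α m).2 X t with hVdef
  set R : ℝ → ℝ := fun y => (U |y| + V |y|) * Aa α y with hRdef
  set L : ℝ → ℝ := fun y => abs (ε₁ * U |y| + ε₂ * Real.sign y * V |y|) * Aa α y with hLdef
  have habs_mem : ∀ y : ℝ, y ∈ Ioc (-X) X → y ≠ 0 → |y| ∈ Ioc (0:ℝ) X :=
    fun y hy hy0 => ⟨abs_pos.2 hy0, abs_le.2 ⟨by linarith [hy.1], hy.2⟩⟩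
  have hLeq : ∀ y ∈ Ioc (-X) X, |Theta α m x y| * Aa α y = L y := by
    intro y hy
    by_cases hy0 : y = 0
    · subst hy0
      show |Theta α m x 0| * Aa α 0
          = abs (ε₁ * U |(0:ℝ)| + ε₂ * Real.sign 0 * V |(0:ℝ)|) * Aa α 0
      rw [hAa0, mul_zero, mul_zero]
    · have h := hstr y hy0
      show |(uv α m).1 x y + (uv α m).2 x y| * Aa α y = L y
      rw [h.1, h.2]
  have hsign_abs : ∀ y : ℝ, y ≠ 0 → |Real.sign y| = 1 := by
    intro y hy
    rcases hy.lt_or_gt with h | h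
    · rw [Real.sign_of_neg h]; norm_num
    · rw [Real.sign_of_pos h]; norm_num
  have hLleR : ∀ y ∈ Ioc (-X) X, L y ≤ R y := by
    intro y hy
    by_cases hy0 : y = 0
    · subst hy0
      show abs (ε₁ * U |(0:ℝ)| + ε₂ * Real.sign 0 * V |(0:ℝ)|) * Aa α 0
          ≤ (U |(0:ℝ)| + V |(0:ℝ)|) * Aa α 0
      rw [hAa0, mul_zero, mul_zero]
    · have hmem := habs_mem y hy hy0
      have h1 : abs (ε₁ * U |y| + ε₂ * Real.sign y * V |y|) ≤ U |y| + V |y| := by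
        have b1 : abs (ε₁ * U |y|) = U |y| := by
          rw [abs_mul, hε₁, one_mul, abs_of_nonneg (hB _ hmem).1]
        have b2 : abs (ε₂ * Real.sign y * V |y|) = V |y| := by
          rw [abs_mul, abs_mul, hε₂, one_mul, hsign_abs y hy0, one_mul,
            abs_of_nonneg (hB _ hmem).2.2.1]
        calc abs (ε₁ * U |y| + ε₂ * Real.sign y * V |y|)
            ≤ abs (ε₁ * U |y|) + abs (ε₂ * Real.sign y * V |y|) := abs_add_le _ _
          _ = U |y| + V |y| := by rw [b1, b2]
      exact mul_le_mul_of_nonneg_right h1 (hAa_nonneg y)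
  have hRbd : ∀ y ∈ Ioc (-X) X, R y ≤ X^m ∧ 0 ≤ R y := by
    intro y hy
    by_cases hy0 : y = 0
    · subst hy0
      show (U |(0:ℝ)| + V |(0:ℝ)|) * Aa α 0 ≤ X^m ∧ 0 ≤ (U |(0:ℝ)| + V |(0:ℝ)|) * Aa α 0
      rw [hAa0, mul_zero]
      exact ⟨pow_nonneg hX.le m, le_refl 0⟩
    · have hmem := habs_mem y hy hy0
      have hpos : 0 < |y| := abs_pos.2 hy0
      have hAy : Aa α y = |y| ^ (2*α+1) := rfl
      have hcancel : |y| ^ (-(2*α+1)) * |y| ^ (2*α+1) = 1 := by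
        rw [← Real.rpow_add hpos, neg_add_cancel, Real.rpow_zero]
      have hUb : U |y| * Aa α y ≤ X^m/2 := by
        rw [hAy]
        calc U |y| * |y| ^ (2*α+1)
            ≤ (X^m/2 * |y| ^ (-(2*α+1))) * |y| ^ (2*α+1) :=
              mul_le_mul_of_nonneg_right (hB _ hmem).2.1 (Real.rpow_nonneg hpos.le _)
          _ = X^m/2 * (|y| ^ (-(2*α+1)) * |y| ^ (2*α+1)) := by ring
          _ = X^m/2 := by rw [hcancel, mul_one]
      have hVb : V |y| * Aa α y ≤ X^m/2 := by
        rw [hAy]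
        calc V |y| * |y| ^ (2*α+1)
            ≤ (X^m/2 * |y| ^ (-(2*α+1))) * |y| ^ (2*α+1) :=
              mul_le_mul_of_nonneg_right (hB _ hmem).2.2.2 (Real.rpow_nonneg hpos.le _)
          _ = X^m/2 * (|y| ^ (-(2*α+1)) * |y| ^ (2*α+1)) := by ring
          _ = X^m/2 := by rw [hcancel, mul_one]
      constructor
      · have hrw : R y = U |y| * Aa α y + V |y| * Aa α y := by
          show (U |y| + V |y|) * Aa α y = _
          ring
        rw [hrw]; linarith
      · exact mul_nonneg (add_nonneg (hB _ hmem).1 (hB _ hmem).2.2.1) (hAa_nonneg y)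
  -- measurability
  have hUabs_c : ContinuousOn (fun y : ℝ => U |y|) (Icc (-X) X \ {0}) := by
    apply hUc.comp continuous_abs.continuousOn
    intro y hy
    have hy0 : y ≠ 0 := fun h => hy.2 (by simp [h])
    exact ⟨abs_pos.2 hy0, abs_le.2 ⟨by linarith [hy.1.1], hy.1.2⟩⟩
  have hVabs_c : ContinuousOn (fun y : ℝ => V |y|) (Icc (-X) X \ {0}) := by
    apply hVc.comp continuous_abs.continuousOn
    intro y hy
    have hy0 : y ≠ 0 := fun h => hy.2 (by simp [h])
    exact ⟨abs_pos.2 hy0, abs_le.2 ⟨by linarith [hy.1.1], hy.1.2⟩⟩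
  have hAc : Continuous (Aa α) := continuous_Aa hα
  have hRaem : AEMeasurable R (volume.restrict (Ioc (-X) X)) :=
    aem_offzero ((hUabs_c.add hVabs_c).mul hAc.continuousOn)
  have hLaem : AEMeasurable L (volume.restrict (Ioc (-X) X)) := by
    have h1 : AEMeasurable (fun y : ℝ => U |y|) (volume.restrict (Ioc (-X) X)) :=
      aem_offzero hUabs_c
    have h2 : AEMeasurable (fun y : ℝ => V |y|) (volume.restrict (Ioc (-X) X)) :=
      aem_offzero hVabs_c
    have h3 : AEMeasurable (fun y : ℝ => ε₁ * U |y| + ε₂ * Real.sign y * V |y|)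
        (volume.restrict (Ioc (-X) X)) := by
      apply AEMeasurable.add (h1.const_mul ε₁)
      exact ((measurable_realSign.aemeasurable.const_mul ε₂).mul h2)
    exact (continuous_abs.measurable.comp_aemeasurable h3).mul hAc.measurable.aemeasurable
  have hRint : IntegrableOn R (Ioc (-X) X) volume := by
    apply Integrable.mono' (g := fun _ => X^m)
      (integrableOn_const measure_Ioc_lt_top.ne) hRaem.aestronglyMeasurable
    apply (ae_restrict_iff' measurableSet_Ioc).2
    apply Filter.Eventually.of_forall
    intro y hy
    rw [Real.norm_eq_abs, abs_of_nonneg (hRbd y hy).2]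
    exact (hRbd y hy).1
  have hLint : IntegrableOn L (Ioc (-X) X) volume := by
    apply Integrable.mono' (g := fun _ => X^m)
      (integrableOn_const measure_Ioc_lt_top.ne) hLaem.aestronglyMeasurable
    apply (ae_restrict_iff' measurableSet_Ioc).2
    apply Filter.Eventually.of_forall
    intro y hy
    have hLnn : 0 ≤ L y := mul_nonneg (abs_nonneg _) (hAa_nonneg y)
    rw [Real.norm_eq_abs, abs_of_nonneg hLnn]
    exact le_trans (hLleR y hy) (hRbd y hy).1
  have hXX : -X ≤ X := by linarith
  rw [intervalIntegral.integral_of_le hXX, setIntegral_congr_fun measurableSet_Ioc hLeq]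
  have step1 : (∫ y in Ioc (-X) X, L y) ≤ ∫ y in Ioc (-X) X, R y :=
    setIntegral_mono_on hLint hRint measurableSet_Ioc hLleR
  have hRint1 : IntervalIntegrable R volume (-X) 0 := by
    rw [intervalIntegrable_iff_integrableOn_Ioc_of_le (by linarith : -X ≤ (0:ℝ))]
    exact hRint.mono_set (Ioc_subset_Ioc_right hX.le)
  have hRint2 : IntervalIntegrable R volume 0 X := by
    rw [intervalIntegrable_iff_integrableOn_Ioc_of_le hX.le]
    exact hRint.mono_set (Ioc_subset_Ioc_left (by linarith))
  have hsplit : (∫ y in (-X)..X, R y) = (∫ y in (-X)..(0:ℝ), R y) + ∫ y in (0:ℝ)..X, R y :=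
    (intervalIntegral.integral_add_adjacent_intervals hRint1 hRint2).symm
  have hReven : ∀ y : ℝ, R (-y) = R y := by
    intro y
    show (U |(-y)| + V |(-y)|) * Aa α (-y) = (U |y| + V |y|) * Aa α y
    have hA : Aa α (-y) = Aa α y := by rw [Aa, Aa, abs_neg]
    rw [abs_neg, hA]
  have hneg : (∫ y in (-X)..(0:ℝ), R y) = ∫ y in (0:ℝ)..X, R y := by
    have h := intervalIntegral.integral_comp_neg (a := (0:ℝ)) (b := X) (f := R)
    rw [neg_zero] at h
    rw [← h]
    apply intervalIntegral.integral_congr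
    intro y _
    show R (-y) = R y
    exact hReven y
  have hUmom := (hM 0).1
  have hVmom := (hM 0).2
  simp only [Nat.cast_zero, zero_add, Nat.add_zero] at hUmom hVmom
  have hRval : (∫ y in (0:ℝ)..X, R y)
      = X^(m+1)/(2*(hUV α m).1 0) + X^(m+1)/(2*(hUV α m).2 0) := by
    have hcong : ∀ y ∈ Ioc (0:ℝ) X,
        R y = U y * y ^ (2*α+1) + V y * y ^ (2*α+1) := by
      intro y hy
      show (U |y| + V |y|) * Aa α y = _
      rw [abs_of_pos hy.1, Aa, abs_of_pos hy.1]
      ring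
    rw [intervalIntegral.integral_of_le hX.le,
      setIntegral_congr_fun measurableSet_Ioc hcong,
      ← intervalIntegral.integral_of_le hX.le]
    have hUint : IntervalIntegrable (fun y => U y * y ^ (2*α+1)) volume 0 X := by
      rw [intervalIntegrable_iff_integrableOn_Ioc_of_le hX.le]
      apply Integrable.mono' (g := fun _ => X^m/2)
        (integrableOn_const measure_Ioc_lt_top.ne)
        (((hUc.mul (continuousOn_id.rpow_const
          (fun y hy => Or.inl (ne_of_gt hy.1)))).aemeasurable
            measurableSet_Ioc).aestronglyMeasurable)
      apply (ae_restrict_iff' measurableSet_Ioc).2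
      apply Filter.Eventually.of_forall
      intro y hy
      have hnn : (0:ℝ) ≤ U y * y ^ (2*α+1) :=
        mul_nonneg (hB y hy).1 (Real.rpow_nonneg hy.1.le _)
      show ‖U y * y ^ (2*α+1)‖ ≤ X^m/2
      rw [Real.norm_eq_abs, abs_of_nonneg hnn]
      have hcancel : y ^ (-(2*α+1)) * y ^ (2*α+1) = 1 := by
        rw [← Real.rpow_add hy.1, neg_add_cancel, Real.rpow_zero]
      calc U y * y ^ (2*α+1)
          ≤ (X^m/2 * y ^ (-(2*α+1))) * y ^ (2*α+1) :=
            mul_le_mul_of_nonneg_right (hB y hy).2.1 (Real.rpow_nonneg hy.1.le _)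
        _ = X^m/2 * (y ^ (-(2*α+1)) * y ^ (2*α+1)) := by ring
        _ = X^m/2 := by rw [hcancel, mul_one]
    have hVint : IntervalIntegrable (fun y => V y * y ^ (2*α+1)) volume 0 X := by
      rw [intervalIntegrable_iff_integrableOn_Ioc_of_le hX.le]
      apply Integrable.mono' (g := fun _ => X^m/2)
        (integrableOn_const measure_Ioc_lt_top.ne)
        (((hVc.mul (continuousOn_id.rpow_const
          (fun y hy => Or.inl (ne_of_gt hy.1)))).aemeasurable
            measurableSet_Ioc).aestronglyMeasurable)
      apply (ae_restrict_iff' measurableSet_Ioc).2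
      apply Filter.Eventually.of_forall
      intro y hy
      have hnn : (0:ℝ) ≤ V y * y ^ (2*α+1) :=
        mul_nonneg (hB y hy).2.2.1 (Real.rpow_nonneg hy.1.le _)
      show ‖V y * y ^ (2*α+1)‖ ≤ X^m/2
      rw [Real.norm_eq_abs, abs_of_nonneg hnn]
      have hcancel : y ^ (-(2*α+1)) * y ^ (2*α+1) = 1 := by
        rw [← Real.rpow_add hy.1, neg_add_cancel, Real.rpow_zero]
      calc V y * y ^ (2*α+1)
          ≤ (X^m/2 * y ^ (-(2*α+1))) * y ^ (2*α+1) :=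
            mul_le_mul_of_nonneg_right (hB y hy).2.2.2 (Real.rpow_nonneg hy.1.le _)
        _ = X^m/2 * (y ^ (-(2*α+1)) * y ^ (2*α+1)) := by ring
        _ = X^m/2 := by rw [hcancel, mul_one]
    have hUmom' : (∫ t in (0:ℝ)..X, U t * t ^ (2*α+1)) = X^(m+1)/(2*(hUV α m).1 0) := hUmom
    have hVmom' : (∫ t in (0:ℝ)..X, V t * t ^ (2*α+1)) = X^(m+1)/(2*(hUV α m).2 0) := hVmom
    rw [intervalIntegral.integral_add hUint hVint, hUmom', hVmom']
  have hUVpos := hUV_pos (α := α) hα m 0 le_rfl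
  have hb1 : X^(m+1)/(hUV α m).1 0 = bcoef α (m+1) X := (bcoef_link hα m X).symm
  have hb2 : X^(m+1)/(hUV α m).2 0 ≤ X * bcoef α m X := by
    cases m with
    | zero =>
      have h1 : (hUV α 0).2 0 = 1 := by show (0:ℝ) + 1 = 1; ring
      rw [h1, bcoef_zero_eq, pow_one, mul_one, div_one]
    | succ l =>
      have hle := hU_le_hV (α := α) hα l
      have hpos1 := (hUV_pos (α := α) hα l 0 le_rfl).1
      have h3 : X^(l+1+1)/(hUV α (l+1)).2 0 ≤ X^(l+1+1)/(hUV α l).1 0 := by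
        apply div_le_div_of_nonneg_left (by positivity) hpos1 hle
      calc X^(l+1+1)/(hUV α (l+1)).2 0 ≤ X^(l+1+1)/(hUV α l).1 0 := h3
        _ = X * (X^(l+1)/(hUV α l).1 0) := by rw [pow_succ]; ring
        _ = X * bcoef α (l+1) X := by rw [bcoef_link hα l X]
  have hne1 : (hUV α m).1 0 ≠ 0 := ne_of_gt hUVpos.1
  have hne2 : (hUV α m).2 0 ≠ 0 := ne_of_gt hUVpos.2
  calc (∫ y in Ioc (-X) X, L y) ≤ ∫ y in Ioc (-X) X, R y := step1
    _ = ∫ y in (-X)..X, R y := (intervalIntegral.integral_of_le hXX).symm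
    _ = (∫ y in (-X)..(0:ℝ), R y) + ∫ y in (0:ℝ)..X, R y := hsplit
    _ = 2 * ∫ y in (0:ℝ)..X, R y := by rw [hneg]; ring
    _ = X^(m+1)/(hUV α m).1 0 + X^(m+1)/(hUV α m).2 0 := by
        rw [hRval]
        field_simp
    _ ≤ bcoef α (m+1) X + X * bcoef α m X := by rw [hb1]; linarith

end Stmt1Aux

/-- Estimate of the kernel `Θ_{k-1}`: the integral is bounded by `b_k(|x|) + |x| b_{k-1}(|x|)`,
and in particular by `c |x|^k` for a constant `c > 0` depending only on `α` and `k`. -/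
theorem stmt_1 (α : ℝ) (hα : -1/2 < α) (k : ℕ) (hk : 1 ≤ k) :
    (∀ x : ℝ, x ≠ 0 →
      (∫ y in (-|x|)..(|x|), |Theta α (k-1) x y| * Aa α y)
        ≤ bcoef α k |x| + |x| * bcoef α (k-1) |x|) ∧
    ∃ c > (0:ℝ), ∀ x : ℝ, x ≠ 0 →
      (∫ y in (-|x|)..(|x|), |Theta α (k-1) x y| * Aa α y) ≤ c * |x| ^ (k:ℝ) := by
  obtain ⟨m, rfl⟩ : ∃ m, k = m + 1 := ⟨k-1, by omega⟩
  simp only [Nat.add_sub_cancel]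
  constructor
  · intro x hx
    exact Stmt1Aux.main_bound hα m hx
  · refine ⟨bcoef α (m+1) 1 + bcoef α m 1, ?_, ?_⟩
    · have h1 := Stmt1Aux.bcoef_pos hα (m+1) one_pos
      have h2 := Stmt1Aux.bcoef_pos hα m one_pos
      linarith
    · intro x hx
      have hX : 0 < |x| := abs_pos.2 hx
      have key := Stmt1Aux.main_bound hα m hx
      have hcast : |x| ^ ((m+1:ℕ):ℝ) = |x|^(m+1) := Real.rpow_natCast _ _
      rw [hcast]
      calc (∫ y in (-|x|)..(|x|), |Theta α m x y| * Aa α y)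
          ≤ bcoef α (m+1) |x| + |x| * bcoef α m |x| := key
        _ = (bcoef α (m+1) 1 + bcoef α m 1) * |x|^(m+1) := by
            rw [Stmt1Aux.bcoef_scale (m+1) |x|, Stmt1Aux.bcoef_scale m |x|]
            ring

end
end

section
/- The Dunkl operator leaves the Schwartz space invariant: if f is a Schwartz function on ℝ, then the function g defined by g(x) = f′(x) + ((2α+1)/x)·(f(x) − f(−x))/2 for x ≠ 0 and g(0) = (2α+2) f′(0) is again a Schwartz function on ℝ. -/
open MeasureTheory Real Set
open scoped ENNReal Nat

noncomputable section

namespace Stmt19Aux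

open SchwartzMap

/-- Iterated derivative within Schwartz space. -/
def iterD (F : SchwartzMap ℝ ℝ) : ℕ → SchwartzMap ℝ ℝ
  | 0 => F
  | n+1 => SchwartzMap.derivCLM ℝ ℝ (iterD F n)

lemma deriv_iterD (F : SchwartzMap ℝ ℝ) (n : ℕ) :
    deriv (⇑(iterD F n)) = ⇑(iterD F (n+1)) := by
  funext x
  exact (SchwartzMap.derivCLM_apply ℝ (iterD F n) x).symm

/-- The regularized quotient sequence `hseq F n x = ∫ t in 0..1, t^n F^{(n+1)}(tx)`. -/
def hseq (F : SchwartzMap ℝ ℝ) (n : ℕ) (x : ℝ) : ℝ :=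
  ∫ t in (0:ℝ)..1, t ^ n * iterD F (n+1) (t * x)

lemma cont_integrand (G : SchwartzMap ℝ ℝ) (n : ℕ) (x : ℝ) :
    Continuous fun t : ℝ => t ^ n * G (t * x) :=
  (continuous_pow n).mul (G.continuous.comp (continuous_id.mul continuous_const))

lemma norm_integrand_le (G : SchwartzMap ℝ ℝ) (n : ℕ) {t : ℝ} (ht : |t| ≤ 1) (y : ℝ) :
    ‖t ^ n * G (t * y)‖ ≤ SchwartzMap.seminorm ℝ 0 0 G := by
  have h0 : ‖G (t * y)‖ ≤ SchwartzMap.seminorm ℝ 0 0 G := by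
    simpa using SchwartzMap.norm_pow_mul_le_seminorm ℝ G 0 (t * y)
  calc ‖t ^ n * G (t * y)‖ = |t| ^ n * ‖G (t * y)‖ := by
        rw [norm_mul, norm_pow, Real.norm_eq_abs]
    _ ≤ 1 * (SchwartzMap.seminorm ℝ 0 0 G) := by
        apply mul_le_mul (pow_le_one₀ (abs_nonneg t) ht) h0 (norm_nonneg _) zero_le_one
    _ = _ := one_mul _

lemma hasDerivAt_hseq (F : SchwartzMap ℝ ℝ) (n : ℕ) (x₀ : ℝ) :
    HasDerivAt (hseq F n) (hseq F (n+1) x₀) x₀ := by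
  have key := intervalIntegral.hasDerivAt_integral_of_dominated_loc_of_deriv_le
    (F := fun x t => t ^ n * iterD F (n+1) (t * x))
    (F' := fun x t => t ^ (n+1) * iterD F (n+2) (t * x))
    (a := (0:ℝ)) (b := 1) (μ := MeasureTheory.volume) (x₀ := x₀)
    (bound := fun _ => SchwartzMap.seminorm ℝ 0 0 (iterD F (n+2)))
    Filter.univ_mem ?_ ?_ ?_ ?_ ?_ ?_
  · exact key.2
  · exact Filter.Eventually.of_forall fun x =>
      (cont_integrand _ n x).aestronglyMeasurable.restrict
  · exact (cont_integrand _ n x₀).intervalIntegrable 0 1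
  · exact (cont_integrand _ (n+1) x₀).aestronglyMeasurable.restrict
  · refine Filter.Eventually.of_forall fun t ht x _ => ?_
    have ht' : t ∈ Set.Ioc (0:ℝ) 1 := by
      simpa [Set.uIoc_of_le (zero_le_one (α := ℝ))] using ht
    exact norm_integrand_le _ (n+1) (abs_le.2 ⟨by linarith [ht'.1], ht'.2⟩) x
  · exact intervalIntegrable_const
  · refine Filter.Eventually.of_forall fun t _ x _ => ?_
    have h0 : HasDerivAt (⇑(iterD F (n+1))) ((iterD F (n+2)) (t * x)) (t * x) := by
      have := ((iterD F (n+1)).differentiableAt (x := t * x)).hasDerivAt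
      rwa [show deriv (⇑(iterD F (n+1))) (t * x) = (iterD F (n+2)) (t * x) from
        congrFun (deriv_iterD F (n+1)) (t * x)] at this
    have h1 : HasDerivAt (fun y : ℝ => (iterD F (n+1)) (t * y))
        ((iterD F (n+2)) (t * x) * (t * 1)) x :=
      h0.comp x ((hasDerivAt_id x).const_mul t)
    have h2 := h1.const_mul (t ^ n)
    convert h2 using 1
    rfl
    ring

lemma deriv_hseq (F : SchwartzMap ℝ ℝ) (n : ℕ) :
    deriv (hseq F n) = hseq F (n+1) :=
  funext fun x => (hasDerivAt_hseq F n x).deriv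

lemma iteratedDeriv_hseq (F : SchwartzMap ℝ ℝ) (m n : ℕ) :
    iteratedDeriv m (hseq F n) = hseq F (n + m) := by
  induction m generalizing n with
  | zero => simp [iteratedDeriv_zero]
  | succ m ih =>
    rw [iteratedDeriv_succ', deriv_hseq, ih, show n + 1 + m = n + (m + 1) from by omega]

lemma contDiff_hseq (F : SchwartzMap ℝ ℝ) (k n : ℕ) : ContDiff ℝ k (hseq F n) := by
  induction k generalizing n with
  | zero =>
    exact contDiff_zero.mpr
      (continuous_iff_continuousAt.mpr fun x => (hasDerivAt_hseq F n x).continuousAt)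
  | succ k ih =>
    rw [show ((k+1 : ℕ) : WithTop ℕ∞) = (k : WithTop ℕ∞) + 1 by push_cast; ring]
    refine contDiff_succ_iff_deriv.mpr ⟨fun x => (hasDerivAt_hseq F n x).differentiableAt, ?_, ?_⟩
    · intro h; exact absurd h (by simp)
    · rw [deriv_hseq]; exact ih (n+1)

lemma smooth_hseq (F : SchwartzMap ℝ ℝ) (n : ℕ) : ContDiff ℝ (((⊤ : ℕ∞) : WithTop ℕ∞)) (hseq F n) :=
  contDiff_infty.mpr fun k => contDiff_hseq F k n

lemma mul_hseq_zero (F : SchwartzMap ℝ ℝ) (hF0 : F 0 = 0) (x : ℝ) :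
    x * hseq F 0 x = F x := by
  rcases eq_or_ne x 0 with rfl | hx
  · simp [hF0]
  · have h1 : hseq F 0 x = ∫ t in (0:ℝ)..1, (iterD F 1) (t * x) := by
      simp [hseq]
    have h2 : (∫ t in (0:ℝ)..1, (iterD F 1) (t * x))
        = x⁻¹ • ∫ s in (0*x)..(1*x), (iterD F 1) s :=
      intervalIntegral.integral_comp_mul_right (fun s => (iterD F 1) s) hx
    have h3 : (∫ s in (0:ℝ)..x, deriv (⇑F) s) = F x - F 0 := by
      refine intervalIntegral.integral_deriv_eq_sub (fun y _ => F.differentiableAt) ?_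
      rw [show deriv (⇑F) = ⇑(iterD F 1) from deriv_iterD F 0]
      exact ((iterD F 1).continuous).intervalIntegrable 0 x
    rw [h1, h2, zero_mul, one_mul, smul_eq_mul, ← mul_assoc, mul_inv_cancel₀ hx, one_mul]
    rw [show ⇑(iterD F 1) = deriv (⇑F) from (deriv_iterD F 0).symm, h3, hF0, sub_zero]

lemma key_identity (F : SchwartzMap ℝ ℝ) (hF0 : F 0 = 0) (n : ℕ) (x : ℝ) :
    iteratedDeriv n (⇑F) x = x * hseq F n x + n * hseq F (n-1) x := by
  induction n generalizing x with
  | zero => simpa using (mul_hseq_zero F hF0 x).symm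
  | succ n ih =>
    have hfun : iteratedDeriv n (⇑F) = fun y => y * hseq F n y + (n:ℝ) * hseq F (n-1) y :=
      funext fun y => ih y
    have hd : HasDerivAt (fun y : ℝ => y * hseq F n y + (n:ℝ) * hseq F (n-1) y)
        (1 * hseq F n x + x * hseq F (n+1) x + (n:ℝ) * hseq F (n-1+1) x) x :=
      ((hasDerivAt_id x).mul (hasDerivAt_hseq F n x)).add
        ((hasDerivAt_hseq F (n-1) x).const_mul (n:ℝ))
    have hnn : (n:ℝ) * hseq F (n-1+1) x = (n:ℝ) * hseq F n x := by
      rcases Nat.eq_zero_or_pos n with h | h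
      · simp [h]
      · rw [show n - 1 + 1 = n from by omega]
    rw [iteratedDeriv_succ, hfun, hd.deriv, hnn]
    simp only [Nat.add_sub_cancel]
    push_cast
    ring

lemma decay_hseq (F : SchwartzMap ℝ ℝ) (hF0 : F 0 = 0) (k n : ℕ) :
    ∃ C, ∀ x : ℝ, |x| ^ k * ‖hseq F n x‖ ≤ C := by
  induction k generalizing n with
  | zero =>
    refine ⟨SchwartzMap.seminorm ℝ 0 0 (iterD F (n+1)), fun x => ?_⟩
    simp only [pow_zero, one_mul]
    have := intervalIntegral.norm_integral_le_of_norm_le_const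
      (C := SchwartzMap.seminorm ℝ 0 0 (iterD F (n+1)))
      (f := fun t => t ^ n * iterD F (n+1) (t * x)) (a := 0) (b := 1) ?_
    · simpa [hseq] using this
    · intro t ht
      have ht' : t ∈ Set.Ioc (0:ℝ) 1 := by
        simpa [Set.uIoc_of_le (zero_le_one (α := ℝ))] using ht
      exact norm_integrand_le _ n (abs_le.2 ⟨by linarith [ht'.1], ht'.2⟩) x
  | succ k ih =>
    match n with
    | 0 =>
      refine ⟨SchwartzMap.seminorm ℝ k 0 F, fun x => ?_⟩
      have h1 : |x| ^ (k+1) * ‖hseq F 0 x‖ = |x| ^ k * ‖x * hseq F 0 x‖ := by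
        rw [norm_mul, Real.norm_eq_abs, Real.norm_eq_abs]; ring
      rw [h1, mul_hseq_zero F hF0 x]
      simpa using SchwartzMap.le_seminorm' ℝ k 0 F x
    | n+1 =>
      obtain ⟨C, hC⟩ := ih n
      have hC0 : 0 ≤ C := le_trans (by positivity) (hC 0)
      refine ⟨SchwartzMap.seminorm ℝ k (n+1) F + (n+1) * C, fun x => ?_⟩
      have h1 : x * hseq F (n+1) x
          = iteratedDeriv (n+1) (⇑F) x - ((n:ℝ)+1) * hseq F n x := by
        rw [key_identity F hF0 (n+1) x]
        simp only [Nat.add_sub_cancel]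
        push_cast
        ring
      have h2 : |x| ^ (k+1) * ‖hseq F (n+1) x‖ = |x| ^ k * ‖x * hseq F (n+1) x‖ := by
        rw [norm_mul, Real.norm_eq_abs, Real.norm_eq_abs]; ring
      rw [h2, h1]
      calc |x| ^ k * ‖iteratedDeriv (n+1) (⇑F) x - ((n:ℝ)+1) * hseq F n x‖
          ≤ |x| ^ k * (‖iteratedDeriv (n+1) (⇑F) x‖ + ((n:ℝ)+1) * ‖hseq F n x‖) := by
            apply mul_le_mul_of_nonneg_left _ (by positivity)
            refine (norm_sub_le _ _).trans ?_
            gcongr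
            exact le_of_eq (by
              rw [norm_mul, Real.norm_eq_abs,
                abs_of_nonneg (by positivity : (0:ℝ) ≤ (n:ℝ)+1)])
        _ = |x| ^ k * ‖iteratedDeriv (n+1) (⇑F) x‖ + ((n:ℝ)+1) * (|x| ^ k * ‖hseq F n x‖) := by
            ring
        _ ≤ SchwartzMap.seminorm ℝ k (n+1) F + ((n:ℝ)+1) * C := by
            gcongr
            · exact SchwartzMap.le_seminorm' ℝ k (n+1) F x
            · exact hC x

/-- `hseq F 0` as a Schwartz map. -/
def hMap (F : SchwartzMap ℝ ℝ) (hF0 : F 0 = 0) : SchwartzMap ℝ ℝ where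
  toFun := hseq F 0
  smooth' := smooth_hseq F 0
  decay' := by
    intro k n
    obtain ⟨C, hC⟩ := decay_hseq F hF0 k n
    refine ⟨C, fun x => ?_⟩
    rw [norm_iteratedFDeriv_eq_norm_iteratedDeriv, iteratedDeriv_hseq, Real.norm_eq_abs]
    simpa using hC x

lemma hMap_apply (F : SchwartzMap ℝ ℝ) (hF0 : F 0 = 0) (x : ℝ) :
    hMap F hF0 x = hseq F 0 x := rfl

end Stmt19Aux

/-- The Dunkl operator leaves the Schwartz space invariant. -/
theorem stmt_19 (α : ℝ) (hα : -1/2 < α) (f : SchwartzMap ℝ ℝ) :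
    ∃ g : SchwartzMap ℝ ℝ, ∀ x : ℝ,
      g x = if x = 0 then (2*α+2) * deriv f 0
            else deriv f x + ((2*α+1)/x) * ((f x - f (-x))/2) := by
  classical
  set Fneg : SchwartzMap ℝ ℝ :=
    SchwartzMap.compCLMOfContinuousLinearEquiv ℝ (ContinuousLinearEquiv.neg ℝ) f with hFneg
  set Fo : SchwartzMap ℝ ℝ := (2:ℝ)⁻¹ • (f - Fneg) with hFodef
  have hFo : ∀ x, Fo x = (f x - f (-x)) / 2 := by
    intro x
    rw [hFodef]
    rw [SchwartzMap.smul_apply, SchwartzMap.sub_apply]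
    have : Fneg x = f (-x) := rfl
    rw [this, smul_eq_mul]
    ring
  have hFo0 : Fo 0 = 0 := by rw [hFo]; simp
  refine ⟨SchwartzMap.derivCLM ℝ ℝ f + (2*α+1) • Stmt19Aux.hMap Fo hFo0, fun x => ?_⟩
  have hg : (SchwartzMap.derivCLM ℝ ℝ f + (2*α+1) • Stmt19Aux.hMap Fo hFo0) x
      = deriv f x + (2*α+1) * Stmt19Aux.hseq Fo 0 x := by
    rw [SchwartzMap.add_apply, SchwartzMap.smul_apply, SchwartzMap.derivCLM_apply,
      Stmt19Aux.hMap_apply, smul_eq_mul]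
  rw [hg]
  rcases eq_or_ne x 0 with rfl | hx
  · have h1 : Stmt19Aux.hseq Fo 0 0 = deriv Fo 0 := by
      have : Stmt19Aux.hseq Fo 0 0 = ∫ t in (0:ℝ)..1, (Stmt19Aux.iterD Fo 1) 0 := by
        simp [Stmt19Aux.hseq]
      rw [this, intervalIntegral.integral_const]
      rw [show ⇑(Stmt19Aux.iterD Fo 1) = deriv (⇑Fo) from (Stmt19Aux.deriv_iterD Fo 0).symm]
      simp
    have h2 : deriv (⇑Fo) 0 = deriv f 0 := by
      have hd : HasDerivAt (⇑Fo) (deriv f 0) 0 := by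
        have hA : HasDerivAt (⇑f) (deriv f 0) 0 := f.differentiableAt.hasDerivAt
        have hB : HasDerivAt (fun y : ℝ => f (-y)) (deriv f (-(0:ℝ)) * (-1)) 0 :=
          f.differentiableAt.hasDerivAt.comp 0 (hasDerivAt_neg 0)
        have hC : HasDerivAt (fun y : ℝ => (f y - f (-y)) / 2)
            ((deriv f 0 - deriv f (-(0:ℝ)) * (-1)) / 2) 0 := (hA.sub hB).div_const 2
        have : (deriv f 0 - deriv f (-(0:ℝ)) * (-1)) / 2 = deriv f 0 := by
          rw [neg_zero]; ring
        rw [this] at hC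
        have hfun : (fun y : ℝ => (f y - f (-y)) / 2) = ⇑Fo := funext fun y => (hFo y).symm
        rwa [hfun] at hC
      exact hd.deriv
    rw [if_pos rfl, h1, h2]
    ring
  · have h1 : Stmt19Aux.hseq Fo 0 x = Fo x / x := by
      rw [← Stmt19Aux.mul_hseq_zero Fo hFo0 x]
      field_simp
    rw [if_neg hx, h1, hFo]
    field_simp


end
end
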